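/- arXiv:0708.0080 — 3 statements merged into one kernel-verified Lean document; each statement's English description precedes it below -/
import Mathlib

section
/- For every real number x with 0 ≤ x ≤ 1 and every natural number n ≥ 1, the sum over b from 1 to n of ⌊b·x⌋ equals the sum over d from 1 to n of S_{⌊n/d⌋}(x). (This is the bijective identity underlying the recursion S_n(x) = Σ_{b=1}^n ⌊bx⌋ − Σ_{d≥2} S_{⌊n/d⌋}(x): every counted pair (A,B) with 1 ≤ B ≤ n and 1 ≤ A ≤ Bx reduces, after dividing by g = gcd(A,B), to a primitive pair counted in S_{⌊n/g⌋}(x).) -/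
/-- `S m x` counts pairs `(a, b)` of natural numbers with `1 ≤ b ≤ m`, `1 ≤ a`,
`(a : ℝ) ≤ b * x`, and `gcd a b = 1`. -/
noncomputable def fareyS (m : ℕ) (x : ℝ) : ℕ :=
  {p : ℕ × ℕ | 1 ≤ p.2 ∧ p.2 ≤ m ∧ 1 ≤ p.1 ∧ (p.1 : ℝ) ≤ (p.2 : ℝ) * x ∧
    Nat.gcd p.1 p.2 = 1}.ncard

theorem stmt_0 (x : ℝ) (hx0 : 0 ≤ x) (hx1 : x ≤ 1) (n : ℕ) (hn : 1 ≤ n) :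
    ∑ b ∈ Finset.Icc 1 n, ⌊(b : ℝ) * x⌋ =
      ∑ d ∈ Finset.Icc 1 n, (fareyS (n / d) x : ℤ) := by
  classical
  have hfloor : ∀ a b : ℕ, (a ≤ (⌊(b:ℝ)*x⌋).toNat ↔ (a:ℝ) ≤ (b:ℝ)*x) := by
    intro a b
    rw [Int.le_toNat (Int.floor_nonneg.2 (by positivity)), Int.le_floor]
    constructor <;> intro h <;> exact_mod_cast h
  set F : ℕ → Finset (ℕ × ℕ) := fun m =>
    (Finset.Icc 1 m ×ˢ Finset.Icc 1 m).filter
      (fun p => (p.1 : ℝ) ≤ (p.2 : ℝ) * x ∧ Nat.gcd p.1 p.2 = 1) with hF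
  have hfar : ∀ m, fareyS m x = (F m).card := by
    intro m
    rw [fareyS, ← Set.ncard_coe_finset]
    congr 1
    ext p
    simp only [hF, Finset.coe_filter, Finset.mem_product, Finset.mem_Icc, Set.mem_setOf_eq]
    constructor
    · rintro ⟨h1, h2, h3, h4, h5⟩
      have hp2 : (0:ℝ) ≤ (p.2:ℝ) := Nat.cast_nonneg _
      have : (p.1 : ℝ) ≤ p.2 := le_trans h4 (by nlinarith)
      exact ⟨⟨⟨h3, le_trans (Nat.cast_le.mp this) h2⟩, h1, h2⟩, h4, h5⟩
    · rintro ⟨⟨⟨h3, _⟩, h1, h2⟩, h4, h5⟩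
      exact ⟨h1, h2, h3, h4, h5⟩
  have key : ∑ b ∈ Finset.Icc 1 n, (⌊(b:ℝ)*x⌋).toNat
      = ∑ d ∈ Finset.Icc 1 n, (F (n / d)).card := by
    have l1 : ∑ b ∈ Finset.Icc 1 n, (⌊(b:ℝ)*x⌋).toNat
        = ((Finset.Icc 1 n).sigma (fun b => Finset.Icc 1 (⌊(b:ℝ)*x⌋).toNat)).card := by
      rw [Finset.card_sigma]
      exact Finset.sum_congr rfl fun b _ => by rw [Nat.card_Icc]; omega
    have l2 : ∑ d ∈ Finset.Icc 1 n, (F (n / d)).card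
        = ((Finset.Icc 1 n).sigma (fun d => F (n / d))).card := by
      rw [Finset.card_sigma]
    rw [l1, l2]
    refine Finset.card_bij'
      (fun p _ => ⟨Nat.gcd p.2 p.1, (p.2 / Nat.gcd p.2 p.1, p.1 / Nat.gcd p.2 p.1)⟩)
      (fun q _ => ⟨q.1 * q.2.2, q.1 * q.2.1⟩) ?_ ?_ ?_ ?_
    · -- hi : image of forward map lands in target
      rintro ⟨b, a⟩ hp
      simp only [Finset.mem_sigma, Finset.mem_Icc] at hp
      obtain ⟨⟨hb1, hbn⟩, ha1, hab⟩ := hp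
      have hax : (a:ℝ) ≤ (b:ℝ)*x := (hfloor a b).1 hab
      set g := Nat.gcd a b with hg
      have hgb : g ∣ b := Nat.gcd_dvd_right a b
      have hga : g ∣ a := Nat.gcd_dvd_left a b
      have hg0 : g ≠ 0 := by
        simp only [hg, ne_eq, Nat.gcd_eq_zero_iff, not_and_or]
        left; omega
      have hg1 : 1 ≤ g := Nat.one_le_iff_ne_zero.2 hg0
      have hgn : g ≤ n := le_trans (Nat.le_of_dvd (by omega) hgb) hbn
      have hb' : 1 ≤ b / g := Nat.one_le_div_iff (by omega) |>.2 (Nat.le_of_dvd (by omega) hgb)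
      have ha' : 1 ≤ a / g := Nat.one_le_div_iff (by omega) |>.2 (Nat.le_of_dvd (by omega) hga)
      have hbdiv : b / g ≤ n / g := Nat.div_le_div_right hbn
      have hcop : Nat.gcd (a / g) (b / g) = 1 := Nat.coprime_div_gcd_div_gcd (by omega)
      have hax' : ((a / g : ℕ):ℝ) ≤ ((b / g : ℕ):ℝ) * x := by
        have hag : (g * (a / g) : ℕ) = a := Nat.mul_div_cancel' hga
        have hbg : (g * (b / g) : ℕ) = b := Nat.mul_div_cancel' hgb
        have hgr : (0:ℝ) < (g:ℝ) := by exact_mod_cast hg1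
        rw [← hag, ← hbg] at hax
        push_cast at hax
        nlinarith
      have hadiv : a / g ≤ n / g := by
        have : a ≤ b := by
          have hbr : (0:ℝ) ≤ (b:ℝ) := Nat.cast_nonneg _
          have : (a:ℝ) ≤ b := le_trans hax (by nlinarith)
          exact_mod_cast this
        exact le_trans (Nat.div_le_div_right this) (Nat.div_le_div_right hbn)
      simp only [Finset.mem_sigma, Finset.mem_Icc, hF, Finset.mem_filter, Finset.mem_product]
      exact ⟨⟨hg1, hgn⟩, ⟨⟨ha', hadiv⟩, hb', hbdiv⟩, hax', hcop⟩
    · -- hj : backward map lands in source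
      rintro ⟨d, a', b'⟩ hq
      simp only [Finset.mem_sigma, Finset.mem_Icc, hF, Finset.mem_filter,
        Finset.mem_product] at hq
      obtain ⟨⟨hd1, hdn⟩, ⟨⟨ha1, han⟩, hb1, hbn⟩, hax, hcop⟩ := hq
      have hbn' : d * b' ≤ n := (Nat.le_div_iff_mul_le (by omega)).1 hbn |>.trans_eq' (by ring)
      simp only [Finset.mem_sigma, Finset.mem_Icc]
      refine ⟨⟨Nat.mul_pos (by omega) (by omega), hbn'⟩, Nat.mul_pos (by omega) (by omega), ?_⟩
      rw [hfloor]
      push_cast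
      nlinarith [Nat.cast_pos (α := ℝ) |>.2 (show 0 < d by omega)]
    · -- left inverse
      rintro ⟨b, a⟩ hp
      simp only [Finset.mem_sigma, Finset.mem_Icc] at hp
      have := Nat.mul_div_cancel' (Nat.gcd_dvd_right a b)
      have := Nat.mul_div_cancel' (Nat.gcd_dvd_left a b)
      simp only [Sigma.mk.inj_iff]
      exact ⟨by assumption, heq_of_eq (by assumption)⟩
    · -- right inverse
      rintro ⟨d, a', b'⟩ hq
      simp only [Finset.mem_sigma, Finset.mem_Icc, hF, Finset.mem_filter,
        Finset.mem_product] at hq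
      obtain ⟨⟨hd1, hdn⟩, ⟨⟨ha1, han⟩, hb1, hbn⟩, hax, hcop⟩ := hq
      have hg : Nat.gcd (d * a') (d * b') = d := by
        rw [Nat.gcd_mul_left, hcop, mul_one]
      simp only [Sigma.mk.inj_iff, hg]
      refine ⟨by trivial, heq_of_eq ?_⟩
      rw [Nat.mul_div_cancel_left _ (by omega), Nat.mul_div_cancel_left _ (by omega)]
  have hL : ∑ b ∈ Finset.Icc 1 n, ⌊(b:ℝ)*x⌋
      = ((∑ b ∈ Finset.Icc 1 n, (⌊(b:ℝ)*x⌋).toNat : ℕ) : ℤ) := by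
    push_cast
    exact Finset.sum_congr rfl fun b _ =>
      (Int.toNat_of_nonneg (Int.floor_nonneg.2 (by positivity))).symm
  rw [hL, key]
  push_cast
  exact Finset.sum_congr rfl fun d _ => by rw [hfar]
end

section
/- For every real number x with 0 ≤ x ≤ 1 and every natural number n ≥ 1, S_n(x) = Σ_{b=1}^n ⌊b·x⌋ − Σ_{d=2}^n S_{⌊n/d⌋}(x). -/
open Finset

/-- Finset version of the coprime Farey count. -/
noncomputable def fareyFc (m : ℕ) (x : ℝ) : Finset (ℕ × ℕ) :=
  @Finset.filter _ (fun p => (p.1 : ℝ) ≤ (p.2 : ℝ) * x ∧ Nat.gcd p.1 p.2 = 1)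
    (Classical.decPred _) (Finset.Icc 1 m ×ˢ Finset.Icc 1 m)

/-- Finset of all pairs (no gcd condition). -/
noncomputable def fareyTn (n : ℕ) (x : ℝ) : Finset (ℕ × ℕ) :=
  @Finset.filter _ (fun p => (p.1 : ℝ) ≤ (p.2 : ℝ) * x)
    (Classical.decPred _) (Finset.Icc 1 n ×ˢ Finset.Icc 1 n)

lemma fareyS_eq_card (x : ℝ) (hx1 : x ≤ 1) (m : ℕ) :
    fareyS m x = (fareyFc m x).card := by
  rw [fareyS, ← Set.ncard_coe_finset]
  congr 1
  ext ⟨a, b⟩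
  simp only [fareyFc, Finset.coe_filter, Finset.mem_product, Finset.mem_Icc,
    Set.mem_setOf_eq]
  constructor
  · rintro ⟨hb1, hbm, ha1, hab, hg⟩
    have hab' : (a : ℝ) ≤ (b : ℝ) := le_trans hab (by
      calc (b : ℝ) * x ≤ (b : ℝ) * 1 := by
            apply mul_le_mul_of_nonneg_left hx1 (by positivity)
        _ = b := mul_one _)
    have : a ≤ b := by exact_mod_cast hab'
    exact ⟨⟨⟨ha1, le_trans this hbm⟩, hb1, hbm⟩, hab, hg⟩
  · rintro ⟨⟨⟨ha1, _⟩, hb1, hbm⟩, hab, hg⟩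
    exact ⟨hb1, hbm, ha1, hab, hg⟩

lemma fareyTn_card (x : ℝ) (hx0 : 0 ≤ x) (hx1 : x ≤ 1) (n : ℕ) :
    ((fareyTn n x).card : ℤ) = ∑ b ∈ Finset.Icc 1 n, ⌊(b : ℝ) * x⌋ := by
  classical
  have hfloor : ∀ b ∈ Finset.Icc 1 n, (⌊(b : ℝ) * x⌋).toNat ≤ b := by
    intro b hb
    have h1 : ⌊(b : ℝ) * x⌋ ≤ ⌊(b : ℝ)⌋ := by
      apply Int.floor_le_floor
      calc (b : ℝ) * x ≤ (b : ℝ) * 1 :=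
            mul_le_mul_of_nonneg_left hx1 (by positivity)
        _ = b := mul_one _
    have h2 : ⌊(b : ℝ)⌋ = (b : ℤ) := Int.floor_natCast b
    omega
  have key : (fareyTn n x).card =
      ∑ b ∈ Finset.Icc 1 n, (⌊(b : ℝ) * x⌋).toNat := by
    rw [fareyTn, Finset.card_filter, Finset.sum_product_right]
    refine Finset.sum_congr rfl ?_
    intro b hb
    have hbn : b ≤ n := (Finset.mem_Icc.mp hb).2
    rw [← Finset.card_filter]
    have hfilter : Finset.filter (fun a : ℕ => (a : ℝ) ≤ (b : ℝ) * x) (Finset.Icc 1 n)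
        = Finset.Icc 1 (⌊(b : ℝ) * x⌋).toNat := by
      ext a
      simp only [Finset.mem_filter, Finset.mem_Icc]
      have hfn : 0 ≤ ⌊(b : ℝ) * x⌋ ∨ True := Or.inr trivial
      constructor
      · rintro ⟨⟨ha1, _⟩, hax⟩
        refine ⟨ha1, ?_⟩
        have : (a : ℤ) ≤ ⌊(b : ℝ) * x⌋ := Int.le_floor.mpr (by exact_mod_cast hax)
        omega
      · rintro ⟨ha1, ha2⟩
        have h2 := hfloor b hb
        have hax : (a : ℤ) ≤ ⌊(b : ℝ) * x⌋ := by omega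
        have := Int.le_floor.mp hax
        exact ⟨⟨ha1, by omega⟩, by exact_mod_cast this⟩
    rw [hfilter, Nat.card_Icc]
    omega
  rw [key]
  push_cast
  refine Finset.sum_congr rfl ?_
  intro b hb
  have : 0 ≤ ⌊(b : ℝ) * x⌋ := Int.floor_nonneg.mpr (by positivity)
  omega

lemma fareyTn_eq_biUnion (x : ℝ) (hx0 : 0 ≤ x) (hx1 : x ≤ 1) (n : ℕ) :
    fareyTn n x = (Finset.Icc 1 n).biUnion
      (fun d => (fareyFc (n / d) x).image (fun p => (d * p.1, d * p.2))) := by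
  classical
  ext ⟨a, b⟩
  simp only [fareyTn, fareyFc, Finset.mem_filter, Finset.mem_product, Finset.mem_Icc,
    Finset.mem_biUnion, Finset.mem_image, Prod.mk.injEq, Prod.exists]
  constructor
  · rintro ⟨⟨⟨ha1, han⟩, hb1, hbn⟩, hab⟩
    set d := Nat.gcd a b with hd
    have hd0 : 0 < d := Nat.gcd_pos_of_pos_left b (by omega)
    have hda : d ∣ a := Nat.gcd_dvd_left a b
    have hdb : d ∣ b := Nat.gcd_dvd_right a b
    have hdn : d ≤ n := le_trans (Nat.le_of_dvd (by omega) hdb) hbn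
    refine ⟨d, ⟨hd0, hdn⟩, a / d, b / d, ⟨⟨⟨?_, ?_⟩, ?_, ?_⟩, ?_, ?_⟩,
      Nat.mul_div_cancel' hda, Nat.mul_div_cancel' hdb⟩
    · exact Nat.one_le_div_iff hd0 |>.mpr (Nat.le_of_dvd (by omega) hda)
    · exact Nat.div_le_div_right han
    · exact Nat.one_le_div_iff hd0 |>.mpr (Nat.le_of_dvd (by omega) hdb)
    · exact Nat.div_le_div_right hbn
    · have ha : (a : ℝ) = (d : ℝ) * ((a / d : ℕ) : ℝ) := by
        rw [← Nat.cast_mul, Nat.mul_div_cancel' hda]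
      have hb : (b : ℝ) = (d : ℝ) * ((b / d : ℕ) : ℝ) := by
        rw [← Nat.cast_mul, Nat.mul_div_cancel' hdb]
      have hdpos : (0 : ℝ) < d := by exact_mod_cast hd0
      rw [ha, hb] at hab
      rw [mul_assoc] at hab
      exact le_of_mul_le_mul_left hab hdpos
    · exact Nat.coprime_div_gcd_div_gcd hd0
  · rintro ⟨d, ⟨hd1, hdn⟩, a', b', ⟨⟨⟨ha'1, _⟩, hb'1, hb'n⟩, hab', hg⟩, rfl, rfl⟩
    have hbn : d * b' ≤ n := by
      calc d * b' ≤ d * (n / d) := Nat.mul_le_mul_left d hb'n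
        _ ≤ n := Nat.mul_div_le n d
    have hab2 : a' ≤ b' := by
      have : (a' : ℝ) ≤ (b' : ℝ) := le_trans hab' (by
        calc (b' : ℝ) * x ≤ (b' : ℝ) * 1 := mul_le_mul_of_nonneg_left hx1 (by positivity)
          _ = b' := mul_one _)
      exact_mod_cast this
    refine ⟨⟨⟨?_, ?_⟩, ?_, hbn⟩, ?_⟩
    · exact Nat.one_le_iff_ne_zero.mpr (by positivity)
    · exact le_trans (Nat.mul_le_mul_left d hab2) hbn
    · exact Nat.one_le_iff_ne_zero.mpr (by positivity)
    · push_cast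
      calc (d : ℝ) * a' ≤ (d : ℝ) * ((b' : ℝ) * x) :=
            mul_le_mul_of_nonneg_left hab' (by positivity)
        _ = (d : ℝ) * b' * x := by ring

theorem stmt_1 (x : ℝ) (hx0 : 0 ≤ x) (hx1 : x ≤ 1) (n : ℕ) (hn : 1 ≤ n) :
    (fareyS n x : ℤ) =
      (∑ b ∈ Finset.Icc 1 n, ⌊(b : ℝ) * x⌋) -
        ∑ d ∈ Finset.Icc 2 n, (fareyS (n / d) x : ℤ) := by
  classical
  have hdisj : ∀ d ∈ Finset.Icc 1 n, ∀ e ∈ Finset.Icc 1 n, d ≠ e →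
      Disjoint ((fareyFc (n / d) x).image (fun p => (d * p.1, d * p.2)))
        ((fareyFc (n / e) x).image (fun p => (e * p.1, e * p.2))) := by
    intro d hd e he hde
    rw [Finset.disjoint_left]
    rintro ⟨a, b⟩ hA hB
    simp only [fareyFc, Finset.mem_image, Finset.mem_filter, Finset.mem_product,
      Finset.mem_Icc, Prod.mk.injEq, Prod.exists] at hA hB
    obtain ⟨a1, b1, ⟨_, _, h1⟩, rfl, rfl⟩ := hA
    obtain ⟨a2, b2, ⟨_, _, h2⟩, hae, hbe⟩ := hB
    apply hde
    have hgd : Nat.gcd (d * a1) (d * b1) = d := by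
      rw [Nat.gcd_mul_left, h1, mul_one]
    have hge : Nat.gcd (e * a2) (e * b2) = e := by
      rw [Nat.gcd_mul_left, h2, mul_one]
    rw [← hgd, ← hae, ← hbe, hge]
  have hcard : (fareyTn n x).card = ∑ d ∈ Finset.Icc 1 n, fareyS (n / d) x := by
    rw [fareyTn_eq_biUnion x hx0 hx1 n, Finset.card_biUnion hdisj]
    refine Finset.sum_congr rfl ?_
    intro d hd
    have hd1 : 1 ≤ d := (Finset.mem_Icc.mp hd).1
    rw [Finset.card_image_of_injective _ ?_, fareyS_eq_card x hx1]
    intro p q hpq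
    simp only [Prod.mk.injEq] at hpq
    have h1 : p.1 = q.1 := by
      have := hpq.1; exact Nat.eq_of_mul_eq_mul_left (by omega) this
    have h2 : p.2 = q.2 := by
      have := hpq.2; exact Nat.eq_of_mul_eq_mul_left (by omega) this
    exact Prod.ext h1 h2
  have hsplit : Finset.Icc 1 n = insert 1 (Finset.Icc 2 n) := by
    ext k
    simp only [Finset.mem_Icc, Finset.mem_insert]
    omega
  have hkey : (∑ b ∈ Finset.Icc 1 n, ⌊(b : ℝ) * x⌋)
      = (fareyS n x : ℤ) + ∑ d ∈ Finset.Icc 2 n, (fareyS (n / d) x : ℤ) := by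
    rw [← fareyTn_card x hx0 hx1 n, hcard]
    push_cast
    rw [hsplit, Finset.sum_insert (by simp)]
    norm_num
  omega
end

section
/- For every natural number n ≥ 1, letting m = ⌈√n⌉, we have Σ_{d=1}^{m} √(n/d) + Σ_{j=1}^{m} √j ≤ 8·n^{3/4}. (This is the sum bound showing that the recursion of Pawlewicz's algorithm, which visits each distinct value ⌊n/d⌋ once at cost √(n/d), has total cost O(n^{3/4}).) -/
lemma sum_inv_sqrt_le (m : ℕ) :
    ∑ d ∈ Finset.Icc 1 m, 1 / Real.sqrt d ≤ 2 * Real.sqrt m := by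
  induction m with
  | zero => simp
  | succ m ih =>
    rw [Finset.sum_Icc_succ_top (by omega)]
    have ha : (0:ℝ) ≤ Real.sqrt m := Real.sqrt_nonneg _
    have hb : (0:ℝ) < Real.sqrt (m+1) := Real.sqrt_pos.mpr (by positivity)
    have ha2 : Real.sqrt m ^ 2 = (m:ℝ) := Real.sq_sqrt (by positivity)
    have hb2 : Real.sqrt (m+1) ^ 2 = (m:ℝ) + 1 := by
      rw [Real.sq_sqrt (by positivity)]
    have key : 1 / Real.sqrt (m+1) ≤ 2 * Real.sqrt (m+1) - 2 * Real.sqrt m := by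
      rw [div_le_iff₀ hb]
      nlinarith [sq_nonneg (Real.sqrt m * Real.sqrt (m+1) - ((m:ℝ) + 1/2)),
        mul_nonneg ha hb.le]
    have : ((m:ℝ) + 1) = ((m+1 : ℕ) : ℝ) := by push_cast; ring
    rw [← this] at *
    linarith [ih]

theorem stmt_14 (n : ℕ) (hn : 1 ≤ n) :
    ∑ d ∈ Finset.Icc 1 ⌈Real.sqrt n⌉₊, Real.sqrt ((n : ℝ) / (d : ℝ)) +
        ∑ j ∈ Finset.Icc 1 ⌈Real.sqrt n⌉₊, Real.sqrt (j : ℝ) ≤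
      8 * (n : ℝ) ^ ((3 : ℝ) / 4) := by
  set s := Real.sqrt n with hs
  set m := ⌈s⌉₊ with hmdef
  have hn0 : (1:ℝ) ≤ (n:ℝ) := by exact_mod_cast hn
  have hs1 : (1:ℝ) ≤ s := by
    rw [hs, show (1:ℝ) = Real.sqrt 1 by simp]
    exact Real.sqrt_le_sqrt hn0
  have hs0 : (0:ℝ) ≤ s := by linarith
  have hm2s : (m:ℝ) ≤ 2 * s := by
    have := Nat.ceil_lt_add_one hs0
    linarith
  -- first sum
  have h1 : ∑ d ∈ Finset.Icc 1 m, Real.sqrt ((n : ℝ) / (d : ℝ))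
      ≤ s * (2 * Real.sqrt m) := by
    have : ∑ d ∈ Finset.Icc 1 m, Real.sqrt ((n : ℝ) / (d : ℝ))
        = s * ∑ d ∈ Finset.Icc 1 m, 1 / Real.sqrt d := by
      rw [Finset.mul_sum]
      refine Finset.sum_congr rfl fun d hd => ?_
      rw [Real.sqrt_div (by positivity)]
      ring
    rw [this]
    exact mul_le_mul_of_nonneg_left (sum_inv_sqrt_le m) hs0
  -- second sum
  have h2 : ∑ j ∈ Finset.Icc 1 m, Real.sqrt (j : ℝ) ≤ (m:ℝ) * Real.sqrt m := by
    calc ∑ j ∈ Finset.Icc 1 m, Real.sqrt (j : ℝ)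
        ≤ ∑ j ∈ Finset.Icc 1 m, Real.sqrt m := by
          refine Finset.sum_le_sum fun j hj => Real.sqrt_le_sqrt ?_
          exact_mod_cast (Finset.mem_Icc.mp hj).2
      _ = (Finset.Icc 1 m).card * Real.sqrt m := by rw [Finset.sum_const, nsmul_eq_mul]
      _ ≤ (m:ℝ) * Real.sqrt m := by
          have : (Finset.Icc 1 m).card ≤ m := by simp [Nat.card_Icc]
          exact mul_le_mul_of_nonneg_right (by exact_mod_cast this) (Real.sqrt_nonneg _)
  have hsqm : Real.sqrt m ≤ Real.sqrt 2 * Real.sqrt s := by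
    rw [← Real.sqrt_mul (by norm_num)]
    exact Real.sqrt_le_sqrt hm2s
  have hsqrt2 : Real.sqrt 2 ≤ 2 := by
    nlinarith [Real.sq_sqrt (show (0:ℝ) ≤ 2 by norm_num), Real.sqrt_nonneg 2]
  have hrw : (n:ℝ) ^ ((3:ℝ)/4) = s * Real.sqrt s := by
    have h0 : (0:ℝ) ≤ (n:ℝ) := by linarith
    rw [hs, Real.sqrt_eq_rpow, Real.sqrt_eq_rpow, ← Real.rpow_mul h0,
      ← Real.rpow_add (by linarith)]
    norm_num
  have hss : (0:ℝ) ≤ Real.sqrt s := Real.sqrt_nonneg _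
  have hsm0 : (0:ℝ) ≤ Real.sqrt m := Real.sqrt_nonneg _
  have hA : s * (2 * Real.sqrt m) ≤ 2 * s * (Real.sqrt 2 * Real.sqrt s) := by
    nlinarith
  have hB : (m:ℝ) * Real.sqrt m ≤ 2 * s * (Real.sqrt 2 * Real.sqrt s) := by
    have h2s0 : (0:ℝ) ≤ 2 * s := by linarith
    have hm0 : (0:ℝ) ≤ (m:ℝ) := by positivity
    calc (m:ℝ) * Real.sqrt m ≤ 2 * s * Real.sqrt m :=
          mul_le_mul_of_nonneg_right hm2s hsm0
      _ ≤ 2 * s * (Real.sqrt 2 * Real.sqrt s) :=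
          mul_le_mul_of_nonneg_left hsqm h2s0
  rw [hrw]
  have hs2 : (0:ℝ) ≤ Real.sqrt 2 := Real.sqrt_nonneg _
  nlinarith [mul_nonneg hs0 hss]
end
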